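/- Let z > 0 and let x > 0 be real, and set c = −i·x/z². Then S_I(c)² ≤ (3x/(2z)) · T_I(c); equivalently, S_I(c)²/T_I(c) ≤ 3x/(2z). -/

import Mathlib

/-- Principal branch complex square root. -/
noncomputable def csqrt (c : ℂ) : ℂ := c ^ ((1 : ℂ) / 2)

/-- `S(c) = sech(√(2c)·z)` (principal square root). -/
noncomputable def Sf (z : ℝ) (c : ℂ) : ℂ := 1 / Complex.cosh (csqrt (2 * c) * (z : ℂ))

/-- `T(c) = tanh(√(2c)·z)/√(2c)` with `T(0) = z` (principal square root). -/
noncomputable def Tf (z : ℝ) (c : ℂ) : ℂ :=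
  if c = 0 then (z : ℂ) else Complex.tanh (csqrt (2 * c) * (z : ℂ)) / csqrt (2 * c)


/-! With `t = √x` one has `√(2c)·z = (1 - i) t`, and a direct evaluation gives
`Im S = sinh t sin t / D` and `Im T = z (sinh 2t - sin 2t) / (4 t D)`, where
`D = |cosh((1 - i) t)|² = cos² t + sinh² t`. The claim becomes
`8 (sinh t sin t)² ≤ 3 t (sinh 2t - sin 2t) D`. The power series give
`sinh u - sin u ≥ u³/3`, which reduces this to `(sinh t sin t)² ≤ t⁴ D`. For `t ≥ 1` that is
immediate from `sinh² t ≤ D`; for `t ≤ 1` it follows from `D ≥ 1` and `sinh t sin t ≤ t²`,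
which is proved by differentiating four times. -/

theorem nonneg_of_hasDerivAt_of_nonneg {f f' : ℝ → ℝ} {a b : ℝ}
    (hf : ∀ x, HasDerivAt f (f' x) x) (ha : f a = 0) (hf' : ∀ x ∈ Set.Icc a b, 0 ≤ f' x) :
    ∀ x ∈ Set.Icc a b, 0 ≤ f x := by
  intro x hx
  have hmono : MonotoneOn f (Set.Icc a b) :=
    monotoneOn_of_hasDerivWithinAt_nonneg (convex_Icc a b)
      (HasDerivAt.continuousOn fun y _ ↦ hf y) (fun y _ ↦ (hf y).hasDerivWithinAt)
      (fun y hy ↦ hf' y (interior_subset hy))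
  simpa [ha] using hmono ⟨le_rfl, hx.1.trans hx.2⟩ hx hx.1

namespace Real

open scoped Nat in
theorem cube_div_three_le_sinh_sub_sin {x : ℝ} (hx : 0 ≤ x) : x ^ 3 / 3 ≤ sinh x - sin x := by
  have hsum := (hasSum_sinh x).sub (hasSum_sin x)
  have hterm (n : ℕ) :
      0 ≤ x ^ (2 * n + 1) / (2 * n + 1)! - (-1) ^ n * x ^ (2 * n + 1) / (2 * n + 1)! := by
    rw [← sub_div, ← one_sub_mul]
    have := sub_nonneg.2 ((le_abs_self ((-1 : ℝ) ^ n)).trans_eq (abs_neg_one_pow n))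
    positivity
  have hfirst := le_hasSum hsum 1 (fun n _ ↦ hterm n)
  norm_num [Nat.factorial] at hfirst
  linarith

theorem sinh_mul_sin_le_sq {t : ℝ} (ht : t ∈ Set.Icc 0 π) : sinh t * sin t ≤ t ^ 2 := by
  -- `f = t² - sinh t sin t` vanishes at `0` together with `f'`, `f''`, `f'''`,
  -- and `f'''' = 4 sinh t sin t ≥ 0` on `[0, π]`.
  have h₃ := nonneg_of_hasDerivAt_of_nonneg (a := 0) (b := π)
    (f := fun y ↦ cosh y * sin y - sinh y * cos y) (f' := fun y ↦ 2 * (sinh y * sin y))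
    (fun y ↦ (((hasDerivAt_cosh y).mul (hasDerivAt_sin y)).sub
      ((hasDerivAt_sinh y).mul (hasDerivAt_cos y))).congr_deriv (by ring))
    (by simp) (fun y hy ↦ by
      have := sinh_nonneg_iff.2 hy.1
      have := sin_nonneg_of_nonneg_of_le_pi hy.1 hy.2
      positivity)
  have h₂ := nonneg_of_hasDerivAt_of_nonneg (a := 0) (b := π)
    (f := fun y ↦ 1 - cosh y * cos y) (f' := fun y ↦ cosh y * sin y - sinh y * cos y)
    (fun y ↦ ((hasDerivAt_const y 1).sub
      ((hasDerivAt_cosh y).mul (hasDerivAt_cos y))).congr_deriv (by ring))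
    (by simp) h₃
  have h₁ := nonneg_of_hasDerivAt_of_nonneg (a := 0) (b := π)
    (f := fun y ↦ 2 * y - (cosh y * sin y + sinh y * cos y))
    (f' := fun y ↦ 2 * (1 - cosh y * cos y))
    (fun y ↦ (((hasDerivAt_id y).const_mul 2).sub (((hasDerivAt_cosh y).mul
      (hasDerivAt_sin y)).add ((hasDerivAt_sinh y).mul (hasDerivAt_cos y)))).congr_deriv (by ring))
    (by simp) fun y hy ↦ mul_nonneg zero_le_two (h₂ y hy)
  have h₀ := nonneg_of_hasDerivAt_of_nonneg (a := 0) (b := π)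
    (f := fun y ↦ y ^ 2 - sinh y * sin y)
    (f' := fun y ↦ 2 * y - (cosh y * sin y + sinh y * cos y))
    (fun y ↦ ((hasDerivAt_pow 2 y).sub
      ((hasDerivAt_sinh y).mul (hasDerivAt_sin y))).congr_deriv (by ring))
    (by simp) h₁
  simpa using h₀ t ht

theorem sinh_mul_sin_sq_le {t : ℝ} (ht : 0 ≤ t) :
    (sinh t * sin t) ^ 2 ≤ t ^ 4 * (cos t ^ 2 + sinh t ^ 2) := by
  rcases le_total t 1 with ht₁ | ht₁
  · have hπ : t ≤ π := ht₁.trans (by linarith [pi_gt_three])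
    have hsin : 0 ≤ sin t := sin_nonneg_of_nonneg_of_le_pi ht hπ
    have hsin_le : sin t ≤ sinh t := (sin_le ht).trans (self_le_sinh_iff.2 ht)
    have hD : 1 ≤ cos t ^ 2 + sinh t ^ 2 := by
      nlinarith [sin_sq_add_cos_sq t, mul_self_le_mul_self hsin hsin_le]
    calc (sinh t * sin t) ^ 2 ≤ (t ^ 2) ^ 2 := by gcongr; exact sinh_mul_sin_le_sq ⟨ht, hπ⟩
      _ = t ^ 4 * 1 := by ring
      _ ≤ t ^ 4 * (cos t ^ 2 + sinh t ^ 2) := by gcongr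
  · calc (sinh t * sin t) ^ 2 = sinh t ^ 2 * sin t ^ 2 := by ring
      _ ≤ 1 * (cos t ^ 2 + sinh t ^ 2) := by nlinarith [sin_sq_le_one t, sq_nonneg (cos t)]
      _ ≤ t ^ 4 * (cos t ^ 2 + sinh t ^ 2) := by gcongr; exact one_le_pow₀ ht₁

theorem sinh_mul_sin_div_sq_le {t : ℝ} (ht : 0 < t) :
    (sinh t * sin t / (cos t ^ 2 + sinh t ^ 2)) ^ 2 ≤
      3 * t * (sinh (2 * t) - sin (2 * t)) / (8 * (cos t ^ 2 + sinh t ^ 2)) := by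
  have hD : 0 < cos t ^ 2 + sinh t ^ 2 := by
    have := sinh_pos_iff.2 ht
    positivity
  have hcube := cube_div_three_le_sinh_sub_sin (by linarith : 0 ≤ 2 * t)
  rw [div_pow, div_le_div_iff₀ (by positivity) (by positivity)]
  calc (sinh t * sin t) ^ 2 * (8 * (cos t ^ 2 + sinh t ^ 2))
      ≤ t ^ 4 * (cos t ^ 2 + sinh t ^ 2) * (8 * (cos t ^ 2 + sinh t ^ 2)) := by
        gcongr; exact sinh_mul_sin_sq_le ht.le
    _ = 3 * t * ((2 * t) ^ 3 / 3) * (cos t ^ 2 + sinh t ^ 2) ^ 2 := by ring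
    _ ≤ 3 * t * (sinh (2 * t) - sin (2 * t)) * (cos t ^ 2 + sinh t ^ 2) ^ 2 := by gcongr

end Real

namespace Complex

theorem cosh_one_sub_I_mul (t : ℝ) :
    cosh ((1 - I) * t) = Real.cosh t * Real.cos t - Real.sinh t * Real.sin t * I := by
  rw [sub_mul, one_mul, mul_comm I, cosh_sub, cosh_mul_I, sinh_mul_I, ← ofReal_cosh,
    ← ofReal_sinh, ← ofReal_cos, ← ofReal_sin]
  ring

theorem sinh_one_sub_I_mul (t : ℝ) :
    sinh ((1 - I) * t) = Real.sinh t * Real.cos t - Real.cosh t * Real.sin t * I := by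
  rw [sub_mul, one_mul, mul_comm I, sinh_sub, cosh_mul_I, sinh_mul_I, ← ofReal_cosh,
    ← ofReal_sinh, ← ofReal_cos, ← ofReal_sin]
  ring

theorem normSq_cosh_one_sub_I_mul (t : ℝ) :
    normSq (cosh ((1 - I) * t)) = Real.cos t ^ 2 + Real.sinh t ^ 2 := by
  rw [cosh_one_sub_I_mul, normSq_apply]
  simp only [sub_re, sub_im, mul_re, mul_im, ofReal_re, ofReal_im, I_re, I_im]
  linear_combination Real.cos t ^ 2 * Real.cosh_sq t + Real.sinh t ^ 2 * Real.sin_sq_add_cos_sq t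

theorem im_inv_cosh_one_sub_I_mul (t : ℝ) :
    (cosh ((1 - I) * t))⁻¹.im =
      Real.sinh t * Real.sin t / (Real.cos t ^ 2 + Real.sinh t ^ 2) := by
  rw [inv_im, normSq_cosh_one_sub_I_mul, cosh_one_sub_I_mul]
  simp only [sub_im, mul_re, mul_im, ofReal_re, ofReal_im, I_re, I_im]
  ring

theorem im_tanh_one_sub_I_mul_div (t : ℝ) (ht : t ≠ 0) :
    (tanh ((1 - I) * t) / ((1 - I) * t)).im =
      (Real.sinh (2 * t) - Real.sin (2 * t)) / (4 * t * (Real.cos t ^ 2 + Real.sinh t ^ 2)) := by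
  rw [tanh_eq_sinh_div_cosh, div_div, div_im, normSq_mul, normSq_cosh_one_sub_I_mul,
    cosh_one_sub_I_mul, sinh_one_sub_I_mul, Real.sinh_two_mul, Real.sin_two_mul, normSq_apply]
  simp only [sub_re, sub_im, mul_re, mul_im, ofReal_re, ofReal_im, I_re, I_im, one_re, one_im]
  field_simp
  linear_combination 4 * t ^ 2 * Real.sinh t * Real.cosh t * Real.sin_sq_add_cos_sq t -
    4 * t ^ 2 * Real.cos t * Real.sin t * Real.cosh_sq t

end Complex

theorem csqrt_two_mul_neg_I_mul_div_sq {x z : ℝ} (hz : 0 < z) (hx : 0 < x) :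
    csqrt (2 * (-Complex.I * x / z ^ 2)) = (1 - Complex.I) * √x / z := by
  have hsq : 2 * (-Complex.I * x / z ^ 2) = ((1 - Complex.I) * √x / z) ^ 2 := by
    rw [div_pow, mul_pow, ← Complex.ofReal_pow √x, Real.sq_sqrt hx.le]
    linear_combination (-(x : ℂ) / z ^ 2) * Complex.I_sq
  rw [csqrt, hsq, one_div]
  exact Complex.sq_cpow_two_inv (by simp; positivity)

theorem S_im_sq_le_T_im (z x : ℝ) (hz : 0 < z) (hx : 0 < x)
    (c : ℂ) (hc : c = -Complex.I * (x : ℂ) / (z : ℂ) ^ 2) :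
    (Sf z c).im ^ 2 ≤ (3 * x / (2 * z)) * (Tf z c).im := by
  set t := √x with ht_def
  have ht : 0 < t := Real.sqrt_pos.2 hx
  have hq : csqrt (2 * c) = (1 - Complex.I) * t / z := hc ▸ csqrt_two_mul_neg_I_mul_div_sq hz hx
  have hw : csqrt (2 * c) * z = (1 - Complex.I) * t := by
    rw [hq, div_mul_cancel₀ _ (Complex.ofReal_ne_zero.2 hz.ne')]
  have hc₀ : c ≠ 0 := by simp [hc, hx.ne', hz.ne']
  have hS : (Sf z c).im = Real.sinh t * Real.sin t / (Real.cos t ^ 2 + Real.sinh t ^ 2) := by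
    rw [Sf, hw, one_div, Complex.im_inv_cosh_one_sub_I_mul]
  have hT : (Tf z c).im = z * ((Real.sinh (2 * t) - Real.sin (2 * t)) /
      (4 * t * (Real.cos t ^ 2 + Real.sinh t ^ 2))) := by
    rw [Tf, if_neg hc₀, hw, hq, ← Complex.im_tanh_one_sub_I_mul_div t ht.ne',
      ← Complex.im_ofReal_mul, div_div_eq_mul_div, mul_comm, mul_div_assoc]
  rw [hS, hT, ← Real.sq_sqrt hx.le, ← ht_def]
  convert Real.sinh_mul_sin_div_sq_le ht using 1
  field_simp
  ring
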